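/- arXiv:2503.19788 — 3 statements merged into one kernel-verified Lean document; each statement's English description precedes it below -/
import Mathlib

section
/- Let X, Y ⊂ ℝ^D be nonempty disjoint closed sets and define g(x) = dist_Y(x) − dist_X(x), S = {x : g(x) = 0}, and the signed distance s(x) = sgn(g(x))·dist_S(x). Then s is 1-Lipschitz: |s(x) − s(y)| ≤ |x−y| for all x, y. -/
/-!
Write `d x` for the distance from `x` to the zero set `S` of the continuous function `g`, so
that the signed distance is `d` where `g ≥ 0` and `-d` where `g ≤ 0` (both agree on `S`, where
`d = 0`). On each side it is therefore as Lipschitz as `d` itself. If `g x ≥ 0 ≥ g y`, the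
intermediate value theorem gives a zero `z` of `g` on the segment `[x, y]`, whence
`d x + d y ≤ dist x z + dist z y = dist x y`.
-/

open Metric

section PseudoMetricSpace

variable {α : Type*} [PseudoMetricSpace α]

noncomputable def signedInfDist (g : α → ℝ) (x : α) : ℝ :=
  Real.sign (g x) * infDist x {z | g z = 0}

theorem signedInfDist_of_nonneg {g : α → ℝ} {x : α} (hx : 0 ≤ g x) :
    signedInfDist g x = infDist x {z | g z = 0} := by
  rcases hx.lt_or_eq with hpos | hzero
  · rw [signedInfDist, Real.sign_of_pos hpos, one_mul]
  · have hxS : x ∈ {z | g z = 0} := hzero.symm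
    rw [signedInfDist, ← hzero, Real.sign_zero, zero_mul, infDist_zero_of_mem hxS]

theorem signedInfDist_of_nonpos {g : α → ℝ} {x : α} (hx : g x ≤ 0) :
    signedInfDist g x = -infDist x {z | g z = 0} := by
  rcases hx.lt_or_eq with hneg | hzero
  · rw [signedInfDist, Real.sign_of_neg hneg, neg_one_mul]
  · have hxS : x ∈ {z | g z = 0} := hzero
    rw [signedInfDist, hzero, Real.sign_zero, zero_mul, infDist_zero_of_mem hxS, neg_zero]

end PseudoMetricSpace

section NormedSpace

variable {E : Type*} [SeminormedAddCommGroup E] [NormedSpace ℝ E]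

theorem infDist_add_infDist_zeroSet_le_dist {g : E → ℝ} (hg : Continuous g) {x y : E}
    (hx : 0 ≤ g x) (hy : g y ≤ 0) :
    infDist x {z | g z = 0} + infDist y {z | g z = 0} ≤ dist x y := by
  obtain ⟨z, hz, hgz⟩ : ∃ z ∈ segment ℝ y x, g z = 0 :=
    (convex_segment y x).isPreconnected.intermediate_value (left_mem_segment ℝ y x)
      (right_mem_segment ℝ y x) hg.continuousOn ⟨hy, hx⟩
  calc infDist x {z | g z = 0} + infDist y {z | g z = 0}
      ≤ dist x z + dist z y := by
        rw [dist_comm z y]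
        exact add_le_add (infDist_le_dist_of_mem hgz) (infDist_le_dist_of_mem hgz)
    _ = dist x y := dist_add_dist_of_mem_segment (segment_symm ℝ y x ▸ hz)

theorem lipschitzWith_signedInfDist {g : E → ℝ} (hg : Continuous g) :
    LipschitzWith 1 (signedInfDist g) := by
  refine LipschitzWith.of_le_add fun x y => ?_
  have hdx : 0 ≤ infDist x {z | g z = 0} := infDist_nonneg
  have hdy : 0 ≤ infDist y {z | g z = 0} := infDist_nonneg
  rcases le_total 0 (g x) with hx | hx <;> rcases le_total 0 (g y) with hy | hy
  · rw [signedInfDist_of_nonneg hx, signedInfDist_of_nonneg hy]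
    exact infDist_le_infDist_add_dist
  · rw [signedInfDist_of_nonneg hx, signedInfDist_of_nonpos hy]
    linarith [infDist_add_infDist_zeroSet_le_dist hg hx hy]
  · rw [signedInfDist_of_nonpos hx, signedInfDist_of_nonneg hy]
    linarith [dist_nonneg (x := x) (y := y)]
  · rw [signedInfDist_of_nonpos hx, signedInfDist_of_nonpos hy, dist_comm]
    linarith [infDist_le_infDist_add_dist (x := y) (y := x) (s := {z | g z = 0})]

end NormedSpace

theorem signed_dist_lipschitz_general {D : ℕ} (X Y : Set (EuclideanSpace ℝ (Fin D)))
    (g : EuclideanSpace ℝ (Fin D) → ℝ)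
    (hg : ∀ x, g x = Metric.infDist x Y - Metric.infDist x X)
    (S : Set (EuclideanSpace ℝ (Fin D))) (hS : S = {x | g x = 0})
    (s : EuclideanSpace ℝ (Fin D) → ℝ)
    (hs : ∀ x, s x = Real.sign (g x) * Metric.infDist x S) :
    ∀ x y, |s x - s y| ≤ dist x y := by
  have hgc : Continuous g := by
    rw [funext hg]
    exact (continuous_infDist_pt Y).sub (continuous_infDist_pt X)
  have hs' : s = signedInfDist g := funext fun x => by rw [hs, hS, signedInfDist]
  intro x y
  simpa [hs', Real.dist_eq] using (lipschitzWith_signedInfDist hgc).dist_le_mul x y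

/-- The signed distance function `s(x) = sgn(g(x))·dist_S(x)`, with
`g(x) = dist_Y(x) − dist_X(x)` and `S = {g = 0}`, is 1-Lipschitz, for `X, Y`
nonempty disjoint closed subsets of `ℝ^D` with `S` nonempty. -/
theorem signed_dist_lipschitz {D : ℕ} (X Y : Set (EuclideanSpace ℝ (Fin D)))
    (hXc : IsClosed X) (hYc : IsClosed Y) (hXne : X.Nonempty) (hYne : Y.Nonempty)
    (hdisj : Disjoint X Y)
    (g : EuclideanSpace ℝ (Fin D) → ℝ)
    (hg : ∀ x, g x = Metric.infDist x Y - Metric.infDist x X)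
    (S : Set (EuclideanSpace ℝ (Fin D))) (hS : S = {x | g x = 0})
    (hSne : S.Nonempty)
    (s : EuclideanSpace ℝ (Fin D) → ℝ)
    (hs : ∀ x, s x = Real.sign (g x) * Metric.infDist x S) :
    ∀ x y, |s x - s y| ≤ dist x y :=
  signed_dist_lipschitz_general X Y g hg S hS s hs
end

section
/- Let X, Y ⊂ ℝ^D be nonempty compact disjoint sets, g(x) = dist_Y(x) − dist_X(x), S = {g = 0}, and s(x) = sgn(g(x))·dist_S(x). Then for every x ∈ X, s(x) ≥ d_{XY}/2, where d_{XY} = dist(X, Y). -/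
/-! A point `p` of the equidistant set is at distance `dist_X(p) ≤ |p - x|` from `Y`, while
`d_{XY} ≤ dist_Y(x) ≤ dist_Y(p) + |x - p|`; hence `d_{XY} ≤ 2|x - p|` for every `x ∈ X`.
On `X` the function `g = dist_Y - dist_X` is `dist_Y ≥ 0`. If `g(x) = 0`, then `x ∈ S` itself,
which forces `d_{XY} ≤ 0 = s(x)`. Otherwise `s(x) = dist_S(x)`, and `S` is nonempty by the
intermediate value theorem applied to `g` between `x` and a point of `Y`. -/

open Metric Set

section PseudoMetricSpace

variable {α : Type*} [PseudoMetricSpace α] {X Y : Set α} {x : α}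

lemma sInf_image2_dist_le_infDist (hx : x ∈ X) : sInf (image2 dist X Y) ≤ infDist x Y := by
  rcases Y.eq_empty_or_nonempty with rfl | hY
  · simp
  refine (le_infDist hY).2 fun y hy => csInf_le ⟨0, ?_⟩ (mem_image2_of_mem hx hy)
  rintro _ ⟨a, -, b, -, rfl⟩
  exact dist_nonneg

lemma sInf_image2_dist_le_two_mul_dist_of_infDist_eq {p : α} (hx : x ∈ X)
    (hp : infDist p Y = infDist p X) : sInf (image2 dist X Y) ≤ 2 * dist x p :=
  calc sInf (image2 dist X Y) ≤ infDist x Y := sInf_image2_dist_le_infDist hx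
    _ ≤ infDist p Y + dist x p := infDist_le_infDist_add_dist
    _ = infDist p X + dist x p := by rw [hp]
    _ ≤ dist p x + dist x p := by gcongr; exact infDist_le_dist_of_mem hx
    _ = 2 * dist x p := by rw [dist_comm]; ring

lemma exists_infDist_eq_infDist [PreconnectedSpace α] (hX : X.Nonempty) (hY : Y.Nonempty) :
    ∃ p, infDist p Y = infDist p X := by
  obtain ⟨x, hx⟩ := hX
  obtain ⟨y, hy⟩ := hY
  have hcont : Continuous fun p => infDist p Y - infDist p X :=
    (continuous_infDist_pt Y).sub (continuous_infDist_pt X)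
  have hzero : (0 : ℝ) ∈ Icc (infDist y Y - infDist y X) (infDist x Y - infDist x X) := by
    simp only [infDist_zero_of_mem hx, infDist_zero_of_mem hy, mem_Icc, zero_sub, sub_zero,
      neg_nonpos]
    exact ⟨infDist_nonneg, infDist_nonneg⟩
  obtain ⟨p, hp⟩ := intermediate_value_univ y x hcont hzero
  exact ⟨p, sub_eq_zero.1 hp⟩

end PseudoMetricSpace

theorem signed_dist_ge_on_X_general {D : ℕ} (X Y : Set (EuclideanSpace ℝ (Fin D)))
    (g : EuclideanSpace ℝ (Fin D) → ℝ)
    (hg : ∀ x, g x = Metric.infDist x Y - Metric.infDist x X)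
    (S : Set (EuclideanSpace ℝ (Fin D))) (hS : S = {x | g x = 0})
    (s : EuclideanSpace ℝ (Fin D) → ℝ)
    (hs : ∀ x, s x = Real.sign (g x) * Metric.infDist x S)
    (d : ℝ) (hd : d = sInf (Set.image2 dist X Y)) :
    ∀ x ∈ X, d / 2 ≤ s x := by
  intro x hx
  have mem_S : ∀ p, p ∈ S ↔ infDist p Y = infDist p X := fun p => by
    rw [hS, mem_ofPred_eq, hg, sub_eq_zero]
  have half_le_dist : ∀ p ∈ S, d / 2 ≤ dist x p := fun p hp => by
    have := sInf_image2_dist_le_two_mul_dist_of_infDist_eq hx ((mem_S p).1 hp)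
    linarith
  have hgx : g x = infDist x Y := by rw [hg, infDist_zero_of_mem hx, sub_zero]
  rcases (infDist_nonneg (x := x) (s := Y)).eq_or_lt with hzero | hpos
  · have hxS : x ∈ S := by rw [mem_S, infDist_zero_of_mem hx, ← hzero]
    simpa [hs, hgx, ← hzero] using half_le_dist x hxS
  · have hY : Y.Nonempty := nonempty_iff_ne_empty.2 fun hempty => by simp [hempty] at hpos
    obtain ⟨p, hp⟩ := exists_infDist_eq_infDist ⟨x, hx⟩ hY
    rw [hs, hgx, Real.sign_of_pos hpos, one_mul]
    exact (le_infDist ⟨p, (mem_S p).2 hp⟩).2 half_le_dist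

/-- For nonempty compact disjoint `X, Y ⊆ ℝ^D`, the signed distance
`s(x) = sgn(g(x))·dist_S(x)` to the equidistant set `S = {dist_X = dist_Y}`
satisfies `s(x) ≥ d_{XY}/2` on `X`, with `d_{XY} = dist(X,Y)`. -/
theorem signed_dist_ge_on_X {D : ℕ} (X Y : Set (EuclideanSpace ℝ (Fin D)))
    (hXc : IsCompact X) (hYc : IsCompact Y) (hXne : X.Nonempty) (hYne : Y.Nonempty)
    (hdisj : Disjoint X Y)
    (g : EuclideanSpace ℝ (Fin D) → ℝ)
    (hg : ∀ x, g x = Metric.infDist x Y - Metric.infDist x X)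
    (S : Set (EuclideanSpace ℝ (Fin D))) (hS : S = {x | g x = 0})
    (s : EuclideanSpace ℝ (Fin D) → ℝ)
    (hs : ∀ x, s x = Real.sign (g x) * Metric.infDist x S)
    (d : ℝ) (hd : d = sInf (Set.image2 dist X Y)) :
    ∀ x ∈ X, d / 2 ≤ s x :=
  signed_dist_ge_on_X_general X Y g hg S hS s hs d hd
end

section
/- Let J be a Hermitian matrix on finite Λ ⊂ ℝ^D satisfying the short-range condition max_x Σ_y |J_{xy}| sinh(a|x−y|)/a = v for some a > 0, and let F : Λ → ℝ satisfy |F(x) − F(y)| ≤ a·min(d, |x−y|) for some d > 0. Then the matrix J̃_{xy} = (1/i)J_{xy} sinh(F(x) − F(y)) has operator norm ‖J̃‖ ≤ a·v. -/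
/-- Norm bound on the deformed hopping matrix: if `J` is Hermitian, satisfies the
short-range condition with parameters `a, v`, and `|F(x) − F(y)| ≤ a·min(d, |x−y|)`,
then `J̃_{xy} = (1/i) J_{xy} sinh(F(x) − F(y))` has operator norm at most `a·v`. -/
theorem deformed_matrix_norm_bound {D : ℕ} {Λ : Type*} [Fintype Λ] [DecidableEq Λ]
    [Nonempty Λ]
    (pos : Λ → EuclideanSpace ℝ (Fin D))
    (J : Matrix Λ Λ ℂ) (hJ : J.IsHermitian)
    (a v d : ℝ) (ha : 0 < a) (hd : 0 < d)
    (hv : Finset.univ.sup' Finset.univ_nonempty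
        (fun x => ∑ y : Λ,
          ‖J x y‖ * (Real.sinh (a * dist (pos x) (pos y)) / a)) = v)
    (F : Λ → ℝ)
    (hF : ∀ x y, |F x - F y| ≤ a * min d (dist (pos x) (pos y)))
    (tJ : Matrix Λ Λ ℂ)
    (htJ : ∀ x y, tJ x y = Complex.I⁻¹ * J x y * (Real.sinh (F x - F y) : ℝ)) :
    ‖(Matrix.toEuclideanCLM (𝕜 := ℂ) tJ :
        EuclideanSpace ℂ Λ →L[ℂ] EuclideanSpace ℂ Λ)‖ ≤ a * v := by
  set g : Λ → Λ → ℝ := fun i j => ‖tJ i j‖ with hgdef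
  have hg0 : ∀ i j, 0 ≤ g i j := fun i j => norm_nonneg _
  have hgabs : ∀ i j, g i j = ‖J i j‖ * |Real.sinh (F i - F j)| := by
    intro i j
    show ‖tJ i j‖ = _
    rw [htJ i j, norm_mul, norm_mul, norm_inv, Complex.norm_I, inv_one, one_mul,
      Complex.norm_real, Real.norm_eq_abs]
  have hgsymm : ∀ i j, g i j = g j i := by
    intro i j
    rw [hgabs, hgabs]
    have h1 : ‖J i j‖ = ‖J j i‖ := by
      rw [← hJ.apply i j]
      simp [Matrix.conjTranspose_apply]
    have h2 : |Real.sinh (F i - F j)| = |Real.sinh (F j - F i)| := by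
      rw [show F i - F j = -(F j - F i) by ring, Real.sinh_neg, abs_neg]
    rw [h1, h2]
  have hrow : ∀ i, ∑ j, g i j ≤ a * v := by
    intro i
    have step : ∀ j, g i j ≤ a * (‖J i j‖ *
        (Real.sinh (a * dist (pos i) (pos j)) / a)) := by
      intro j
      rw [hgabs]
      have h1 : |Real.sinh (F i - F j)| ≤ Real.sinh (a * dist (pos i) (pos j)) := by
        rw [Real.abs_sinh]
        apply Real.sinh_le_sinh.2
        exact (hF i j).trans (by
          have := min_le_right d (dist (pos i) (pos j))
          nlinarith)
      calc ‖J i j‖ * |Real.sinh (F i - F j)|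
          ≤ ‖J i j‖ * Real.sinh (a * dist (pos i) (pos j)) := by
            exact mul_le_mul_of_nonneg_left h1 (norm_nonneg _)
        _ = a * (‖J i j‖ * (Real.sinh (a * dist (pos i) (pos j)) / a)) := by
            field_simp
    calc ∑ j, g i j ≤ ∑ j, a * (‖J i j‖ *
          (Real.sinh (a * dist (pos i) (pos j)) / a)) := Finset.sum_le_sum fun j _ => step j
      _ = a * ∑ j, ‖J i j‖ * (Real.sinh (a * dist (pos i) (pos j)) / a) := by
          rw [Finset.mul_sum]
      _ ≤ a * v := by
          apply mul_le_mul_of_nonneg_left _ ha.le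
          rw [← hv]
          exact Finset.le_sup' (fun x => ∑ y : Λ, ‖J x y‖ * (Real.sinh (a * dist (pos x) (pos y)) / a)) (Finset.mem_univ i)
  have hv0 : 0 ≤ v := by
    rw [← hv]
    obtain ⟨x0⟩ := ‹Nonempty Λ›
    refine le_trans ?_ (Finset.le_sup' (fun x => ∑ y : Λ, ‖J x y‖ * (Real.sinh (a * dist (pos x) (pos y)) / a)) (Finset.mem_univ x0))
    refine Finset.sum_nonneg fun j _ => mul_nonneg (norm_nonneg _)
      (div_nonneg ?_ ha.le)
    have h0 : (0:ℝ) ≤ a * dist (pos x0) (pos j) := by positivity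
    calc (0:ℝ) = Real.sinh 0 := Real.sinh_zero.symm
      _ ≤ _ := Real.sinh_le_sinh.2 h0
  have hM0 : 0 ≤ a * v := mul_nonneg ha.le hv0
  refine ContinuousLinearMap.opNorm_le_bound _ hM0 fun x => ?_
  have hAx : ∀ i, ((Matrix.toEuclideanCLM (𝕜 := ℂ) tJ) x) i = ∑ j, tJ i j * x j := by
    intro i
    have h := congrFun (Matrix.ofLp_toEuclideanCLM (𝕜 := ℂ) tJ x) i
    simpa [Matrix.mulVec, dotProduct] using h
  refine le_of_pow_le_pow_left₀ two_ne_zero (mul_nonneg hM0 (norm_nonneg x)) ?_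
  have hnormsq : ∀ (y : EuclideanSpace ℂ Λ), ‖y‖ ^ 2 = ∑ i, ‖y i‖ ^ 2 := by
    intro y
    rw [EuclideanSpace.norm_eq, Real.sq_sqrt (Finset.sum_nonneg fun i _ => sq_nonneg _)]
  rw [hnormsq]
  have key : ∀ i, ‖((Matrix.toEuclideanCLM (𝕜 := ℂ) tJ) x) i‖ ^ 2 ≤
      (a * v) * ∑ j, g i j * ‖x j‖ ^ 2 := by
    intro i
    rw [hAx i]
    have h1 : ‖∑ j, tJ i j * x j‖ ≤ ∑ j, g i j * ‖x j‖ := by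
      refine (norm_sum_le _ _).trans (Finset.sum_le_sum fun j _ => ?_)
      rw [norm_mul]
    have h2 : (∑ j, g i j * ‖x j‖) ^ 2 ≤ (∑ j, g i j) * (∑ j, g i j * ‖x j‖ ^ 2) := by
      have := Finset.sum_mul_sq_le_sq_mul_sq Finset.univ
        (fun j => Real.sqrt (g i j)) (fun j => Real.sqrt (g i j) * ‖x j‖)
      calc (∑ j, g i j * ‖x j‖) ^ 2
          = (∑ j, Real.sqrt (g i j) * (Real.sqrt (g i j) * ‖x j‖)) ^ 2 := by
            congr 1
            refine Finset.sum_congr rfl fun j _ => ?_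
            rw [← mul_assoc, Real.mul_self_sqrt (hg0 i j)]
        _ ≤ (∑ j, Real.sqrt (g i j) ^ 2) * (∑ j, (Real.sqrt (g i j) * ‖x j‖) ^ 2) := this
        _ = (∑ j, g i j) * (∑ j, g i j * ‖x j‖ ^ 2) := by
            congr 1
            · exact Finset.sum_congr rfl fun j _ => Real.sq_sqrt (hg0 i j)
            · refine Finset.sum_congr rfl fun j _ => ?_
              rw [mul_pow, Real.sq_sqrt (hg0 i j)]
    calc ‖∑ j, tJ i j * x j‖ ^ 2 ≤ (∑ j, g i j * ‖x j‖) ^ 2 := by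
          apply pow_le_pow_left₀ (norm_nonneg _) h1
      _ ≤ (∑ j, g i j) * (∑ j, g i j * ‖x j‖ ^ 2) := h2
      _ ≤ (a * v) * ∑ j, g i j * ‖x j‖ ^ 2 := by
          apply mul_le_mul_of_nonneg_right (hrow i)
          exact Finset.sum_nonneg fun j _ => mul_nonneg (hg0 i j) (sq_nonneg _)
  calc ∑ i, ‖((Matrix.toEuclideanCLM (𝕜 := ℂ) tJ) x) i‖ ^ 2
      ≤ ∑ i, (a * v) * ∑ j, g i j * ‖x j‖ ^ 2 := Finset.sum_le_sum fun i _ => key i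
    _ = (a * v) * ∑ j, (∑ i, g i j) * ‖x j‖ ^ 2 := by
        rw [← Finset.mul_sum, Finset.sum_comm]
        congr 1
        exact Finset.sum_congr rfl fun j _ => by rw [Finset.sum_mul]
    _ ≤ (a * v) * ∑ j, (a * v) * ‖x j‖ ^ 2 := by
        apply mul_le_mul_of_nonneg_left _ hM0
        refine Finset.sum_le_sum fun j _ => ?_
        apply mul_le_mul_of_nonneg_right _ (sq_nonneg _)
        calc ∑ i, g i j = ∑ i, g j i := Finset.sum_congr rfl fun i _ => hgsymm i j
          _ ≤ a * v := hrow j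
    _ = (a * v * ‖x‖) ^ 2 := by
        rw [← Finset.mul_sum, ← hnormsq x]
        ring
end
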